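/- Let λ > 0, z ∈ ℝ^N and suppose r ∈ ℝ, r ≠ 0, satisfies r^3 = r^2 * (1 - λ^{-2}) + (r - r^2) * |z|^2. If |λ - 1| ≤ 1/2 and |z| ≤ 1/2, then |r| ≤ C * (|λ-1| + |z|) for a universal constant C (depending only on the stated bounds). -/

import Mathlib

theorem stmt12 : ∃ C > 0, ∀ (N : ℕ) (lam r : ℝ) (z : EuclideanSpace ℝ (Fin N)),
    0 < lam → r ≠ 0 →
    r ^ 3 = r ^ 2 * (1 - (lam⁻¹) ^ 2) + (r - r ^ 2) * ‖z‖ ^ 2 →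
    |lam - 1| ≤ 1 / 2 → ‖z‖ ≤ 1 / 2 →
    |r| ≤ C * (|lam - 1| + ‖z‖) := by
  refine ⟨10, by norm_num, fun N lam r z hlam hr heq hL hs => ?_⟩
  set s : ℝ := ‖z‖ with hsdef
  have hs0 : 0 ≤ s := norm_nonneg z
  set L : ℝ := |lam - 1| with hLdef
  have hL0 : 0 ≤ L := abs_nonneg _
  have hlam1 : 1/2 ≤ lam := by
    have := abs_le.mp hL; linarith [this.1]
  have hlam2 : lam ≤ 3/2 := by
    have := abs_le.mp hL; linarith [this.2]
  set A : ℝ := 1 - (lam⁻¹) ^ 2 with hAdef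
  have hlamne : lam ≠ 0 := ne_of_gt hlam
  have hAeq : A * lam ^ 2 = lam ^ 2 - 1 := by
    rw [hAdef, sub_mul, inv_pow, inv_mul_cancel₀ (pow_ne_zero 2 hlamne)]; ring
  have hA : |A| ≤ 10 * L := by
    have hlsq : (1:ℝ)/4 ≤ lam ^ 2 := by nlinarith
    rcases abs_cases A with ⟨h1, h2⟩ | ⟨h1, h2⟩ <;>
      rcases abs_cases (lam - 1) with ⟨h3, h4⟩ | ⟨h3, h4⟩ <;>
      rw [h1, hLdef, h3] <;> nlinarith
  -- divide by r
  have hkey : r ^ 2 = r * A + (1 - r) * s ^ 2 := by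
    have : r * (r ^ 2) = r * (r * A + (1 - r) * s ^ 2) := by ring_nf; ring_nf at heq; linarith
    exact mul_left_cancel₀ hr this
  obtain ⟨hA1, hA2⟩ := abs_le.mp hA
  rcases abs_cases r with ⟨h1, h2⟩ | ⟨h1, h2⟩ <;> rw [h1] <;> by_contra hc <;> push_neg at hc
  · have hr0 : (0:ℝ) < r := h2.lt_of_ne (Ne.symm hr)
    nlinarith [mul_le_mul_of_nonneg_left hA2 hr0.le, mul_nonneg hs0 hs0,
      mul_nonneg (mul_nonneg hs0 hs0) hr0.le, mul_le_mul_of_nonneg_left hc.le hs0]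
  · have hr0 : (0:ℝ) < -r := neg_pos.mpr h2
    nlinarith [mul_le_mul_of_nonneg_left hA1 hr0.le, mul_nonneg hs0 hs0,
      mul_nonneg (mul_nonneg hs0 hs0) hr0.le, mul_le_mul_of_nonneg_left hc.le hs0]
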